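/- arXiv:1607.07354 — 7 statements merged into one kernel-verified Lean document; each statement's English description precedes it below -/
import Mathlib

section
/- (Rolle's Theorem for the conformable proportional derivative) Let a < b with [a,b] ⊆ I. If f : [a,b] → ℝ is continuous on [a,b], differentiable on (a,b), and satisfies f(a) = e_0(a,b)·f(b), then there exists at least one point c ∈ (a,b) such that D^α f(c) = 0. -/
open Set

/-- The conformable proportional derivative `D^α f(t) = κ₁(t) f(t) + κ₀(t) f'(t)`. -/
noncomputable def Dconf (κ₀ κ₁ : ℝ → ℝ) (f : ℝ → ℝ) (t : ℝ) : ℝ :=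
  κ₁ t * f t + κ₀ t * deriv f t

/-- The conformable exponential `e_0(t,s) = exp(-∫_s^t κ₁/κ₀)`. -/
noncomputable def e0 (κ₀ κ₁ : ℝ → ℝ) (t s : ℝ) : ℝ :=
  Real.exp (-(∫ τ in s..t, κ₁ τ / κ₀ τ))

/-!
Multiplying by the integrating factor `exp (∫_a^t κ₁/κ₀)` turns `D^α f` into
`κ₀ · exp (-∫_a^t κ₁/κ₀) · (f · exp (∫_a^t κ₁/κ₀))'`, and the boundary condition
`f a = e_0(a,b) f b` says exactly that `f · exp (∫_a^t κ₁/κ₀)` takes equal values at `a` and `b`;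
classical Rolle applied to this product gives the point `c`.
-/

open MeasureTheory Real

theorem ContinuousOn.continuousOn_integral_Icc {F : ℝ → ℝ} {a b : ℝ} (hab : a ≤ b)
    (hF : ContinuousOn F (Icc a b)) :
    ContinuousOn (fun t => ∫ τ in a..t, F τ) (Icc a b) := by
  rw [← uIcc_of_le hab] at hF ⊢
  exact intervalIntegral.continuousOn_primitive_interval' hF.intervalIntegrable left_mem_uIcc

theorem ContinuousOn.hasDerivAt_integral_of_mem_Ioo {F : ℝ → ℝ} {a b x : ℝ}
    (hF : ContinuousOn F (Icc a b)) (hx : x ∈ Ioo a b) :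
    HasDerivAt (fun t => ∫ τ in a..t, F τ) (F x) x := by
  have hIcc : Icc a b ∈ nhds x := Icc_mem_nhds hx.1 hx.2
  have hint : IntervalIntegrable F volume a x :=
    (hF.mono (Icc_subset_Icc_right hx.2.le)).intervalIntegrable_of_Icc hx.1.le
  exact intervalIntegral.integral_hasDerivAt_right hint
    ((hF.mono Ioo_subset_Icc_self).stronglyMeasurableAtFilter isOpen_Ioo x hx)
    (hF.continuousAt hIcc)

theorem exists_deriv_add_mul_eq_zero {f P p : ℝ → ℝ} {a b : ℝ} (hab : a < b)
    (hfc : ContinuousOn f (Icc a b)) (hfd : ∀ x ∈ Ioo a b, DifferentiableAt ℝ f x)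
    (hPc : ContinuousOn P (Icc a b)) (hPd : ∀ x ∈ Ioo a b, HasDerivAt P (p x) x)
    (hfab : f a * exp (P a) = f b * exp (P b)) :
    ∃ c ∈ Ioo a b, deriv f c + p c * f c = 0 := by
  have hgd : ∀ x ∈ Ioo a b, HasDerivAt (fun t => f t * exp (P t))
      ((deriv f x + p x * f x) * exp (P x)) x := fun x hx =>
    ((hfd x hx).hasDerivAt.mul (hPd x hx).exp).congr_deriv (by ring)
  obtain ⟨c, hc, hc0⟩ :=
    exists_hasDerivAt_eq_zero hab (hfc.mul (continuous_exp.comp_continuousOn hPc)) hfab hgd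
  exact ⟨c, hc, (mul_eq_zero.1 hc0).resolve_right (exp_ne_zero _)⟩

theorem e0_eq_exp_integral (κ₀ κ₁ : ℝ → ℝ) (t s : ℝ) :
    e0 κ₀ κ₁ t s = exp (∫ τ in t..s, κ₁ τ / κ₀ τ) := by
  rw [e0, intervalIntegral.integral_symm, neg_neg]

theorem Dconf_eq_mul_deriv_add {κ₀ κ₁ f : ℝ → ℝ} {t : ℝ} (ht : κ₀ t ≠ 0) :
    Dconf κ₀ κ₁ f t = κ₀ t * (deriv f t + κ₁ t / κ₀ t * f t) := by
  rw [Dconf]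
  field_simp
  ring

theorem conformable_rolle_general
    (I : Set ℝ) (κ₀ κ₁ : ℝ → ℝ)
    (hκ₀c : ContinuousOn κ₀ I) (hκ₁c : ContinuousOn κ₁ I)
    (hκ₀pos : ∀ t ∈ I, 0 < κ₀ t)
    (a b : ℝ) (hab : a < b) (hIab : Icc a b ⊆ I)
    (f : ℝ → ℝ)
    (hfc : ContinuousOn f (Icc a b))
    (hfd : ∀ t ∈ Ioo a b, DifferentiableAt ℝ f t)
    (hfab : f a = e0 κ₀ κ₁ a b * f b) :
    ∃ c ∈ Ioo a b, Dconf κ₀ κ₁ f c = 0 := by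
  have hκ₀ne : ∀ t ∈ Icc a b, κ₀ t ≠ 0 := fun t ht => (hκ₀pos t (hIab ht)).ne'
  have hq : ContinuousOn (fun τ => κ₁ τ / κ₀ τ) (Icc a b) :=
    (hκ₁c.mono hIab).div (hκ₀c.mono hIab) hκ₀ne
  obtain ⟨c, hc, hc0⟩ := exists_deriv_add_mul_eq_zero hab hfc hfd
    (hq.continuousOn_integral_Icc hab.le) (fun x hx => hq.hasDerivAt_integral_of_mem_Ioo hx)
    (by simp [hfab, e0_eq_exp_integral, mul_comm])
  exact ⟨c, hc, by rw [Dconf_eq_mul_deriv_add (hκ₀ne c (Ioo_subset_Icc_self hc)), hc0, mul_zero]⟩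

/-- Rolle's theorem for the conformable proportional derivative. -/
theorem conformable_rolle
    (I : Set ℝ) (κ₀ κ₁ : ℝ → ℝ)
    (hκ₀c : ContinuousOn κ₀ I) (hκ₁c : ContinuousOn κ₁ I)
    (hκ₀pos : ∀ t ∈ I, 0 < κ₀ t) (hκ₁nn : ∀ t ∈ I, 0 ≤ κ₁ t)
    (a b : ℝ) (hab : a < b) (hIab : Icc a b ⊆ I)
    (f : ℝ → ℝ)
    (hfc : ContinuousOn f (Icc a b))
    (hfd : ∀ t ∈ Ioo a b, DifferentiableAt ℝ f t)
    (hfab : f a = e0 κ₀ κ₁ a b * f b) :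
    ∃ c ∈ Ioo a b, Dconf κ₀ κ₁ f c = 0 :=
  conformable_rolle_general I κ₀ κ₁ hκ₀c hκ₁c hκ₀pos a b hab hIab f hfc hfd hfab
end

section
/- (Mean Value Theorem for the conformable proportional derivative) Let a < b with [a,b] ⊆ I. If f : [a,b] → ℝ is continuous on [a,b] and differentiable on (a,b), then there exists at least one point c ∈ (a,b) such that D^α f(c) = (e_0(c,b)·f(b) − e_0(c,a)·f(a)) / h₁(b,a). -/
open Set

/-!
With `E(t) = ∫_a^t κ₁/κ₀` and `G(t) = ∫_a^t 1/κ₀`, the function `e^E` is an integrating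
factor: `(e^E f)' = e^E · D^α f / κ₀` and `G' = 1/κ₀`. Cauchy's mean value theorem for
`e^E f` and `G` cancels the common factor `1/κ₀(c)`, and `e₀(c,s) = e^{E(s) - E(c)}` turns
the result into the claimed identity; `G(b) = h₁(b,a) > 0` because `κ₀ > 0`.
-/

open MeasureTheory intervalIntegral

lemma hasDerivAt_integral_of_continuousOn_Icc {g : ℝ → ℝ} {a b x : ℝ}
    (hg : ContinuousOn g (Icc a b)) (hx : x ∈ Ioo a b) :
    HasDerivAt (fun u => ∫ s in a..u, g s) (g x) x := by
  have hcont : ∀ y ∈ Ioo a b, ContinuousAt g y := fun y hy =>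
    hg.continuousAt (Icc_mem_nhds hy.1 hy.2)
  exact integral_hasDerivAt_right
    ((hg.mono (Icc_subset_Icc_right hx.2.le)).intervalIntegrable_of_Icc hx.1.le)
    (ContinuousAt.stronglyMeasurableAtFilter isOpen_Ioo hcont x hx) (hcont x hx)

lemma continuousOn_integral_of_continuousOn_Icc {g : ℝ → ℝ} {a b : ℝ} (hab : a ≤ b)
    (hg : ContinuousOn g (Icc a b)) :
    ContinuousOn (fun u => ∫ s in a..u, g s) (Icc a b) := by
  simpa only [uIcc_of_le hab] using
    continuousOn_primitive_interval (μ := volume) (a := a) (b := b)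
      (by simpa only [uIcc_of_le hab] using hg.integrableOn_Icc)

lemma e0_eq_exp_sub {κ₀ κ₁ : ℝ → ℝ} {a s t : ℝ}
    (hs : IntervalIntegrable (fun τ => κ₁ τ / κ₀ τ) volume a s)
    (ht : IntervalIntegrable (fun τ => κ₁ τ / κ₀ τ) volume a t) :
    e0 κ₀ κ₁ t s =
      Real.exp ((∫ τ in a..s, κ₁ τ / κ₀ τ) - ∫ τ in a..t, κ₁ τ / κ₀ τ) := by
  rw [e0, ← integral_interval_sub_left ht hs, neg_sub]

lemma hasDerivAt_exp_mul_eq_Dconf {κ₀ κ₁ E f : ℝ → ℝ} {x : ℝ}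
    (hE : HasDerivAt E (κ₁ x / κ₀ x) x) (hf : DifferentiableAt ℝ f x)
    (hκ₀ : κ₀ x ≠ 0) :
    HasDerivAt (fun t => Real.exp (E t) * f t)
      (Real.exp (E x) * Dconf κ₀ κ₁ f x / κ₀ x) x := by
  have hprod : HasDerivAt (fun t => Real.exp (E t) * f t) _ x :=
    hE.exp.mul hf.hasDerivAt
  convert hprod using 1
  rw [Dconf]
  field_simp

theorem exists_Dconf_mul_integral_eq {κ₀ κ₁ f : ℝ → ℝ} {a b : ℝ} (hab : a < b)
    (hκ₀ : ContinuousOn κ₀ (Icc a b)) (hκ₁ : ContinuousOn κ₁ (Icc a b))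
    (hκ₀ne : ∀ t ∈ Icc a b, κ₀ t ≠ 0) (hfc : ContinuousOn f (Icc a b))
    (hfd : ∀ t ∈ Ioo a b, DifferentiableAt ℝ f t) :
    ∃ c ∈ Ioo a b, Dconf κ₀ κ₁ f c * (∫ t in a..b, 1 / κ₀ t) =
      e0 κ₀ κ₁ c b * f b - e0 κ₀ κ₁ c a * f a := by
  set E := fun u => ∫ τ in a..u, κ₁ τ / κ₀ τ with hE
  have hratio : ContinuousOn (fun τ => κ₁ τ / κ₀ τ) (Icc a b) := hκ₁.div hκ₀ hκ₀ne
  have hinv : ContinuousOn (fun τ => 1 / κ₀ τ) (Icc a b) :=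
    continuousOn_const.div hκ₀ hκ₀ne
  obtain ⟨c, hc, hslope⟩ := exists_ratio_hasDerivAt_eq_ratio_slope
    (fun t => Real.exp (E t) * f t) (fun x => Real.exp (E x) * Dconf κ₀ κ₁ f x / κ₀ x) hab
    ((continuousOn_integral_of_continuousOn_Icc hab.le hratio).rexp.mul hfc)
    (fun x hx => hasDerivAt_exp_mul_eq_Dconf
      (hasDerivAt_integral_of_continuousOn_Icc hratio hx) (hfd x hx)
      (hκ₀ne x (Ioo_subset_Icc_self hx)))
    (fun u => ∫ τ in a..u, 1 / κ₀ τ) (fun x => 1 / κ₀ x)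
    (continuousOn_integral_of_continuousOn_Icc hab.le hinv)
    (fun x hx => hasDerivAt_integral_of_continuousOn_Icc hinv hx)
  refine ⟨c, hc, ?_⟩
  have hratio_ac : IntervalIntegrable (fun τ => κ₁ τ / κ₀ τ) volume a c :=
    (hratio.mono (Icc_subset_Icc_right hc.2.le)).intervalIntegrable_of_Icc hc.1.le
  rw [e0_eq_exp_sub (hratio.intervalIntegrable_of_Icc hab.le) hratio_ac,
    e0_eq_exp_sub IntervalIntegrable.refl hratio_ac]
  have hκ₀c : κ₀ c ≠ 0 := hκ₀ne c (Ioo_subset_Icc_self hc)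
  simp only [hE, integral_same, sub_zero, Real.exp_zero, one_mul, zero_sub, Real.exp_sub,
    Real.exp_neg] at hslope ⊢
  field_simp at hslope ⊢
  linear_combination hslope

theorem conformable_mean_value_general
    (I : Set ℝ) (κ₀ κ₁ : ℝ → ℝ)
    (hκ₀c : ContinuousOn κ₀ I) (hκ₁c : ContinuousOn κ₁ I)
    (hκ₀pos : ∀ t ∈ I, 0 < κ₀ t)
    (a b : ℝ) (hab : a < b) (hIab : Icc a b ⊆ I)
    (f : ℝ → ℝ)
    (hfc : ContinuousOn f (Icc a b))
    (hfd : ∀ t ∈ Ioo a b, DifferentiableAt ℝ f t) :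
    ∃ c ∈ Ioo a b,
      Dconf κ₀ κ₁ f c =
        (e0 κ₀ κ₁ c b * f b - e0 κ₀ κ₁ c a * f a) / (∫ t in a..b, 1 / κ₀ t) := by
  have hκ₀ : ContinuousOn κ₀ (Icc a b) := hκ₀c.mono hIab
  have hκ₀ne : ∀ t ∈ Icc a b, κ₀ t ≠ 0 := fun t ht => (hκ₀pos t (hIab ht)).ne'
  have hh₁ : 0 < ∫ t in a..b, 1 / κ₀ t :=
    intervalIntegral_pos_of_pos_on
      ((continuousOn_const.div hκ₀ hκ₀ne).intervalIntegrable_of_Icc hab.le)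
      (fun t ht => one_div_pos.mpr (hκ₀pos t (hIab (Ioo_subset_Icc_self ht)))) hab
  obtain ⟨c, hc, hmul⟩ :=
    exists_Dconf_mul_integral_eq hab hκ₀ (hκ₁c.mono hIab) hκ₀ne hfc hfd
  exact ⟨c, hc, eq_div_of_mul_eq hh₁.ne' hmul⟩

/-- Mean Value Theorem for the conformable proportional derivative:
there is `c ∈ (a,b)` with `D^α f(c) = (e₀(c,b) f(b) - e₀(c,a) f(a)) / h₁(b,a)`,
where `h₁(b,a) = ∫_a^b 1 d_α t = ∫_a^b 1/κ₀(t) dt`. -/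
theorem conformable_mean_value
    (I : Set ℝ) (κ₀ κ₁ : ℝ → ℝ)
    (hκ₀c : ContinuousOn κ₀ I) (hκ₁c : ContinuousOn κ₁ I)
    (hκ₀pos : ∀ t ∈ I, 0 < κ₀ t) (hκ₁nn : ∀ t ∈ I, 0 ≤ κ₁ t)
    (a b : ℝ) (hab : a < b) (hIab : Icc a b ⊆ I)
    (f : ℝ → ℝ)
    (hfc : ContinuousOn f (Icc a b))
    (hfd : ∀ t ∈ Ioo a b, DifferentiableAt ℝ f t) :
    ∃ c ∈ Ioo a b,
      Dconf κ₀ κ₁ f c =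
        (e0 κ₀ κ₁ c b * f b - e0 κ₀ κ₁ c a * f a) / (∫ t in a..b, 1 / κ₀ t) :=
  conformable_mean_value_general I κ₀ κ₁ hκ₀c hκ₁c hκ₀pos a b hab hIab f hfc hfd
end

section
/- (Existence and uniqueness for the self-adjoint initial value problem) Let p, q, h : I → ℝ be continuous with p(t) ≠ 0 for all t ∈ I, let t₀ ∈ I, and let x₀, x₁ ∈ ℝ. Then there exists a unique function x on I, with D^α x and D^α[p·D^α x] continuous on I, such that D^α[p·D^α x](t) + q(t)·x(t) = h(t) for all t ∈ I, x(t₀) = x₀, and D^α x(t₀) = x₁. -/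
open Set

/-- `x` is a solution of the nonhomogeneous self-adjoint equation
`D^α[p D^α x] + q x = h` on `I`: `x` is differentiable on `I`, `D^α x` and
`D^α[p D^α x]` exist and are continuous on `I`, and the equation holds on `I`. -/
def IsSolutionSA (κ₀ κ₁ p q h : ℝ → ℝ) (I : Set ℝ) (x : ℝ → ℝ) : Prop :=
  (∀ t ∈ I, DifferentiableAt ℝ x t) ∧
  ContinuousOn (Dconf κ₀ κ₁ x) I ∧
  (∀ t ∈ I, DifferentiableAt ℝ (fun s => p s * Dconf κ₀ κ₁ x s) t) ∧
  ContinuousOn (Dconf κ₀ κ₁ (fun s => p s * Dconf κ₀ κ₁ x s)) I ∧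
  ∀ t ∈ I, Dconf κ₀ κ₁ (fun s => p s * Dconf κ₀ κ₁ x s) t + q t * x t = h t


/-!
Writing `w = p · D^α x`, the self-adjoint equation is the first-order linear system
`κ₀ x' = w / p - κ₁ x`, `κ₀ w' = h - q x - κ₁ w`, whose coefficients are continuous on `I`
because `κ₀` and `p` do not vanish there, and the initial data become `(x₀, p(t₀) x₁)`.
A linear system with continuous coefficients is Lipschitz in the state, uniformly on compact
subintervals of `I`. On such a subinterval Picard–Lindelöf produces local solutions whose time
of existence depends only on the Lipschitz constant, not on the initial value, so finitely many
of them glue to a solution on the whole subinterval. Grönwall uniqueness makes these solutions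
agree on overlaps, so they glue to a solution on `I`, and it also shows that this is the only one.
-/

open Filter Topology NNReal

section IntegralCurves

variable {E : Type*} [NormedAddCommGroup E] [NormedSpace ℝ E] {v : ℝ → E → E}

namespace IsIntegralCurveOn

lemma congr {γ γ' : ℝ → E} {s : Set ℝ} (hγ : IsIntegralCurveOn γ v s) (h : EqOn γ' γ s) :
    IsIntegralCurveOn γ' v s := fun t ht => by
  rw [h ht]
  exact (hγ t ht).congr_of_mem h ht

lemma union_of_isClosed {γ : ℝ → E} {s₁ s₂ : Set ℝ} (h₁ : IsClosed s₁) (h₂ : IsClosed s₂)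
    (hγ₁ : IsIntegralCurveOn γ v s₁) (hγ₂ : IsIntegralCurveOn γ v s₂) :
    IsIntegralCurveOn γ v (s₁ ∪ s₂) := by
  have within {s : Set ℝ} (hs : IsClosed s) (hγ : IsIntegralCurveOn γ v s) (t : ℝ) :
      HasDerivWithinAt γ (v t (γ t)) s t := by
    by_cases ht : t ∈ s
    · exact hγ t ht
    · exact HasFDerivWithinAt.of_notMem_closure (by rwa [hs.closure_eq])
  exact fun t _ => (within h₁ hγ₁ t).union (within h₂ hγ₂ t)

end IsIntegralCurveOn

lemma exists_isIntegralCurveOn_Icc_glue {γ₁ γ₂ : ℝ → E} {a b c : ℝ} (hac : a ≤ c) (hcb : c ≤ b)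
    (hγ₁ : IsIntegralCurveOn γ₁ v (Icc a c)) (hγ₂ : IsIntegralCurveOn γ₂ v (Icc c b))
    (hc : γ₁ c = γ₂ c) :
    ∃ γ, EqOn γ γ₁ (Icc a c) ∧ EqOn γ γ₂ (Icc c b) ∧ IsIntegralCurveOn γ v (Icc a b) := by
  have h₁ : EqOn ((Iic c).piecewise γ₁ γ₂) γ₁ (Icc a c) := fun t ht =>
    piecewise_eq_of_mem _ _ _ ht.2
  have h₂ : EqOn ((Iic c).piecewise γ₁ γ₂) γ₂ (Icc c b) := fun t ht => by
    rcases ht.1.eq_or_lt with rfl | hct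
    · simpa using hc
    · exact piecewise_eq_of_notMem _ _ _ (not_le.2 hct)
  refine ⟨_, h₁, h₂, ?_⟩
  rw [← Icc_union_Icc_eq_Icc hac hcb]
  exact (hγ₁.congr h₁).union_of_isClosed isClosed_Icc isClosed_Icc (hγ₂.congr h₂)

theorem eqOn_of_hasDerivAt_of_ordConnected {I : Set ℝ} (hI : I.OrdConnected)
    (hl : ∀ a b, Icc a b ⊆ I → ∃ K : ℝ≥0, ∀ t ∈ Icc a b, LipschitzWith K (v t))
    {f g : ℝ → E} (hf : ∀ t ∈ I, HasDerivAt f (v t (f t)) t)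
    (hg : ∀ t ∈ I, HasDerivAt g (v t (g t)) t) {t₀ : ℝ} (ht₀ : t₀ ∈ I) (heq : f t₀ = g t₀) :
    EqOn f g I := by
  intro t ht
  rcases le_total t₀ t with h | h
  · have hsub := hI.out ht₀ ht
    obtain ⟨K, hK⟩ := hl t₀ t hsub
    exact ODE_solution_unique_of_mem_Icc_right (s := fun _ => univ)
      (fun u hu => (hK u (Ico_subset_Icc_self hu)).lipschitzOnWith)
      (HasDerivAt.continuousOn fun u hu => hf u (hsub hu))
      (fun u hu => (hf u (hsub (Ico_subset_Icc_self hu))).hasDerivWithinAt) (fun _ _ => trivial)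
      (HasDerivAt.continuousOn fun u hu => hg u (hsub hu))
      (fun u hu => (hg u (hsub (Ico_subset_Icc_self hu))).hasDerivWithinAt) (fun _ _ => trivial)
      heq ⟨h, le_rfl⟩
  · have hsub := hI.out ht ht₀
    obtain ⟨K, hK⟩ := hl t t₀ hsub
    exact ODE_solution_unique_of_mem_Icc_left (s := fun _ => univ)
      (fun u hu => (hK u (Ioc_subset_Icc_self hu)).lipschitzOnWith)
      (HasDerivAt.continuousOn fun u hu => hf u (hsub hu))
      (fun u hu => (hf u (hsub (Ioc_subset_Icc_self hu))).hasDerivWithinAt) (fun _ _ => trivial)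
      (HasDerivAt.continuousOn fun u hu => hg u (hsub hu))
      (fun u hu => (hg u (hsub (Ioc_subset_Icc_self hu))).hasDerivWithinAt) (fun _ _ => trivial)
      heq ⟨le_rfl, h⟩

lemma IsOpen.exists_Icc_subset_of_mem_of_mem {I : Set ℝ} (hIopen : IsOpen I)
    (hIconn : I.OrdConnected) {s t : ℝ} (hs : s ∈ I) (ht : t ∈ I) :
    ∃ a b, Icc a b ⊆ I ∧ s ∈ Ioo a b ∧ t ∈ Ioo a b := by
  obtain ⟨a, ha, haI⟩ := Filter.Eventually.exists_lt (hIopen.mem_nhds (min_rec' I hs ht))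
  obtain ⟨b, hb, hbI⟩ := Filter.Eventually.exists_gt (hIopen.mem_nhds (max_rec' I hs ht))
  exact ⟨a, b, hIconn.out haI hbI, ⟨by grind, by grind⟩, ⟨by grind, by grind⟩⟩

variable [CompleteSpace E]

-- Picard–Lindelöf on the ball of radius `C ≥ sup ‖v · z‖` around `z`: there `‖v‖ ≤ C (K + 1)`,
-- so the step `(K + 1)⁻¹` works for every initial value `z`.
lemma exists_isIntegralCurveOn_Icc_local {a b s : ℝ} {K : ℝ≥0}
    (hlip : ∀ t ∈ Icc a b, LipschitzWith K (v t)) (hcont : ∀ x, ContinuousOn (v · x) (Icc a b))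
    (hs : s ∈ Icc a b) (z : E) :
    ∃ γ, γ s = z ∧
      IsIntegralCurveOn γ v (Icc (max a (s - (K + 1 : ℝ)⁻¹)) (min b (s + (K + 1 : ℝ)⁻¹))) := by
  set ε : ℝ := (K + 1 : ℝ)⁻¹
  have hε : 0 < ε := by positivity
  have hsub : Icc (max a (s - ε)) (min b (s + ε)) ⊆ Icc a b :=
    Icc_subset_Icc (le_max_left _ _) (min_le_left _ _)
  obtain ⟨C, hC⟩ := isCompact_Icc.exists_bound_of_continuousOn (hcont z)
  have hv : ∀ t ∈ Icc a b, ∀ x ∈ Metric.closedBall z C.toNNReal,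
      ‖v t x‖ ≤ ↑(C.toNNReal * (K + 1)) := by
    intro t ht x hx
    rw [mem_closedBall_iff_norm] at hx
    have hCt := (hC t ht).trans (Real.le_coe_toNNReal C)
    calc ‖v t x‖ ≤ ‖v t z‖ + ‖v t x - v t z‖ := norm_le_norm_add_norm_sub' _ _
      _ ≤ C.toNNReal + K * C.toNNReal := by
          gcongr
          exact ((hlip t ht).norm_sub_le x z).trans (by gcongr)
      _ = ↑(C.toNNReal * (K + 1)) := by push_cast; ring
  have hPL : IsPicardLindelof v (tmin := max a (s - ε)) (tmax := min b (s + ε))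
      ⟨s, by simp [hs.1, hs.2, hε.le]⟩ z C.toNNReal 0 (C.toNNReal * (K + 1)) K :=
    { lipschitzOnWith := fun t ht => (hlip t (hsub ht)).lipschitzOnWith
      continuousOn := fun x _ => (hcont x).mono hsub
      norm_le := fun t ht x hx => hv t (hsub ht) x hx
      mul_max_le := by
        have hmax : max (min b (s + ε) - s) (s - max a (s - ε)) ≤ ε :=
          max_le (by linarith [min_le_right b (s + ε)]) (by linarith [le_max_right a (s - ε)])
        calc ↑(C.toNNReal * (K + 1)) * max (min b (s + ε) - s) (s - max a (s - ε))
            ≤ ↑(C.toNNReal * (K + 1)) * ε := by gcongr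
          _ = ↑C.toNNReal - ↑(0 : ℝ≥0) := by
              simp only [ε, NNReal.coe_zero, sub_zero]
              push_cast
              field_simp }
  exact hPL.exists_eq_forall_mem_Icc_hasDerivWithinAt₀

lemma exists_isIntegralCurveOn_Icc_extend {a b c d : ℝ} {K : ℝ≥0}
    (hlip : ∀ t ∈ Icc a b, LipschitzWith K (v t)) (hcont : ∀ x, ContinuousOn (v · x) (Icc a b))
    (hac : a ≤ c) (hcd : c ≤ d) (hdb : d ≤ b) {γ : ℝ → E} (hγ : IsIntegralCurveOn γ v (Icc c d)) :
    ∃ γ', EqOn γ' γ (Icc c d) ∧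
      IsIntegralCurveOn γ' v (Icc (max a (c - (K + 1 : ℝ)⁻¹)) (min b (d + (K + 1 : ℝ)⁻¹))) := by
  have hε : 0 < (K + 1 : ℝ)⁻¹ := by positivity
  obtain ⟨γr, hγr, hγr_sol⟩ :=
    exists_isIntegralCurveOn_Icc_local hlip hcont ⟨hac.trans hcd, hdb⟩ (γ d)
  obtain ⟨γl, hγl, hγl_sol⟩ :=
    exists_isIntegralCurveOn_Icc_local hlip hcont ⟨hac, hcd.trans hdb⟩ (γ c)
  have hd : d ≤ min b (d + (K + 1 : ℝ)⁻¹) := le_min hdb (by linarith)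
  have hc : max a (c - (K + 1 : ℝ)⁻¹) ≤ c := max_le hac (by linarith)
  obtain ⟨γ₁, hγ₁, -, hγ₁_sol⟩ := exists_isIntegralCurveOn_Icc_glue hcd hd hγ
    (hγr_sol.mono (Icc_subset_Icc (max_le (by linarith) (by linarith)) le_rfl)) hγr.symm
  obtain ⟨γ₂, -, hγ₂, hγ₂_sol⟩ := exists_isIntegralCurveOn_Icc_glue hc (hcd.trans hd)
    (hγl_sol.mono (Icc_subset_Icc le_rfl (le_min (hcd.trans hdb) (by linarith))))
    hγ₁_sol (by rw [hγl, hγ₁ ⟨le_rfl, hcd⟩])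
  exact ⟨γ₂, fun t ht => (hγ₂ ⟨ht.1, ht.2.trans hd⟩).trans (hγ₁ ht), hγ₂_sol⟩

theorem exists_isIntegralCurveOn_Icc {a b t₀ : ℝ} {K : ℝ≥0}
    (hlip : ∀ t ∈ Icc a b, LipschitzWith K (v t)) (hcont : ∀ x, ContinuousOn (v · x) (Icc a b))
    (ht₀ : t₀ ∈ Icc a b) (x₀ : E) :
    ∃ γ, γ t₀ = x₀ ∧ IsIntegralCurveOn γ v (Icc a b) := by
  set ε : ℝ := (K + 1 : ℝ)⁻¹
  have hε : 0 < ε := by positivity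
  have grow : ∀ n : ℕ, ∃ γ, γ t₀ = x₀ ∧
      IsIntegralCurveOn γ v (Icc (max a (t₀ - n * ε)) (min b (t₀ + n * ε))) := by
    intro n
    induction n with
    | zero =>
      obtain ⟨γ, hγ, hγ_sol⟩ := exists_isIntegralCurveOn_Icc_local hlip hcont ht₀ x₀
      exact ⟨γ, hγ, hγ_sol.mono (Icc_subset_Icc (by grind) (by grind))⟩
    | succ n ih =>
      obtain ⟨γ, hγ, hγ_sol⟩ := ih
      have hn : 0 ≤ n * ε := by positivity
      obtain ⟨γ', hγ', hγ'_sol⟩ := exists_isIntegralCurveOn_Icc_extend hlip hcont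
        (c := max a (t₀ - n * ε)) (d := min b (t₀ + n * ε)) (by grind) (by grind) (by grind) hγ_sol
      refine ⟨γ', (hγ' ⟨by grind, by grind⟩).trans hγ, hγ'_sol.mono (Icc_subset_Icc ?_ ?_)⟩ <;>
        push_cast <;> grind
  obtain ⟨n, hn⟩ := exists_nat_ge ((b - a) / ε)
  have hnε : b - a ≤ n * ε := by rwa [div_le_iff₀ hε] at hn
  obtain ⟨γ, hγ, hγ_sol⟩ := grow n
  rw [max_eq_left (by linarith [ht₀.2]), min_eq_left (by linarith [ht₀.1])] at hγ_sol
  exact ⟨γ, hγ, hγ_sol⟩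

theorem exists_hasDerivAt_of_isOpen_of_ordConnected {I : Set ℝ} (hIopen : IsOpen I)
    (hIconn : I.OrdConnected)
    (hl : ∀ a b, Icc a b ⊆ I → ∃ K : ℝ≥0, ∀ t ∈ Icc a b, LipschitzWith K (v t))
    (hc : ∀ x, ContinuousOn (v · x) I) {t₀ : ℝ} (ht₀ : t₀ ∈ I) (x₀ : E) :
    ∃ γ, γ t₀ = x₀ ∧ ∀ t ∈ I, HasDerivAt γ (v t (γ t)) t := by
  have local_sol : ∀ t ∈ I, ∃ (J : Set ℝ) (γ : ℝ → E), J ∈ 𝓝 t ∧ J ⊆ I ∧ J.OrdConnected ∧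
      t₀ ∈ J ∧ γ t₀ = x₀ ∧ ∀ u ∈ J, HasDerivAt γ (v u (γ u)) u := by
    intro t ht
    obtain ⟨a, b, hsub, hta, ht₀a⟩ := hIopen.exists_Icc_subset_of_mem_of_mem hIconn ht ht₀
    obtain ⟨K, hK⟩ := hl a b hsub
    obtain ⟨γ, hγ, hγ_sol⟩ :=
      exists_isIntegralCurveOn_Icc hK (fun x => (hc x).mono hsub) (Ioo_subset_Icc_self ht₀a) x₀
    exact ⟨Ioo a b, γ, Ioo_mem_nhds hta.1 hta.2, Ioo_subset_Icc_self.trans hsub, ordConnected_Ioo,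
      ht₀a, hγ, fun u hu =>
        hγ_sol u (Ioo_subset_Icc_self hu) |>.hasDerivAt (Icc_mem_nhds hu.1 hu.2)⟩
  choose! J sol hJ hJI hJconn ht₀J hsol₀ hsol using local_sol
  have agree : ∀ t ∈ I, ∀ u ∈ J t, sol u u = sol t u := by
    intro t ht u hu
    have huI := hJI t ht hu
    refine eqOn_of_hasDerivAt_of_ordConnected ((hJconn u huI).inter (hJconn t ht))
      (fun a b hab => hl a b (hab.trans (inter_subset_left.trans (hJI u huI))))
      (fun w hw => hsol u huI w hw.1) (fun w hw => hsol t ht w hw.2) ⟨ht₀J u huI, ht₀J t ht⟩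
      ((hsol₀ u huI).trans (hsol₀ t ht).symm) ⟨mem_of_mem_nhds (hJ u huI), hu⟩
  refine ⟨fun t => sol t t, hsol₀ t₀ ht₀, fun t ht => ?_⟩
  have hloc : (fun u => sol u u) =ᶠ[𝓝 t] sol t :=
    eventually_of_mem (hJ t ht) (agree t ht)
  exact (hsol t ht t (mem_of_mem_nhds (hJ t ht))).congr_of_eventuallyEq hloc

end IntegralCurves

section LinearODE

variable {E : Type*} [NormedAddCommGroup E] [NormedSpace ℝ E] {I : Set ℝ}
  {A : ℝ → E →L[ℝ] E} {g : ℝ → E}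

lemma exists_lipschitzWith_clm_apply_add (hA : ContinuousOn A I) {a b : ℝ} (hsub : Icc a b ⊆ I) :
    ∃ K : ℝ≥0, ∀ t ∈ Icc a b, LipschitzWith K (fun x => A t x + g t) := by
  obtain ⟨C, hC⟩ := isCompact_Icc.exists_bound_of_continuousOn (hA.mono hsub)
  refine ⟨C.toNNReal, fun t ht => ((A t).lipschitz.add (LipschitzWith.const (g t))).weaken ?_⟩
  rw [add_zero, ← NNReal.coe_le_coe, coe_nnnorm]
  exact (hC t ht).trans (Real.le_coe_toNNReal C)

theorem exists_unique_hasDerivAt_clm_apply_add [CompleteSpace E] (hIopen : IsOpen I)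
    (hIconn : I.OrdConnected) (hA : ContinuousOn A I) (hg : ContinuousOn g I) {t₀ : ℝ}
    (ht₀ : t₀ ∈ I) (x₀ : E) :
    ∃ γ, (γ t₀ = x₀ ∧ ∀ t ∈ I, HasDerivAt γ (A t (γ t) + g t) t) ∧
      ∀ γ', γ' t₀ = x₀ → (∀ t ∈ I, HasDerivAt γ' (A t (γ' t) + g t) t) → EqOn γ' γ I := by
  have hl a b (hsub : Icc a b ⊆ I) := exists_lipschitzWith_clm_apply_add (g := g) hA hsub
  obtain ⟨γ, hγ₀, hγ⟩ := exists_hasDerivAt_of_isOpen_of_ordConnected hIopen hIconn hl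
    (fun x => (hA.clm_apply continuousOn_const).add hg) ht₀ x₀
  exact ⟨γ, ⟨hγ₀, hγ⟩, fun γ' hγ'₀ hγ' =>
    eqOn_of_hasDerivAt_of_ordConnected hIconn hl hγ' hγ ht₀ (hγ'₀.trans hγ₀.symm)⟩

end LinearODE

lemma HasDerivAt.dconf_eq {κ₀ κ₁ f : ℝ → ℝ} {f' t : ℝ} (hf : HasDerivAt f f' t) :
    Dconf κ₀ κ₁ f t = κ₁ t * f t + κ₀ t * f' := by
  rw [Dconf, hf.deriv]

lemma Filter.EventuallyEq.dconf_eq {κ₀ κ₁ f g : ℝ → ℝ} {t : ℝ} (h : f =ᶠ[𝓝 t] g) :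
    Dconf κ₀ κ₁ f t = Dconf κ₀ κ₁ g t := by
  rw [Dconf, Dconf, h.eq_of_nhds, h.deriv_eq]

section SelfAdjoint

open ContinuousLinearMap

variable {κ₀ κ₁ p q h : ℝ → ℝ} {I : Set ℝ}

-- The linear part of `(x, w)' = ((w / p - κ₁ x) / κ₀, (h - q x - κ₁ w) / κ₀)`.
noncomputable def selfAdjointSystem (κ₀ κ₁ p q : ℝ → ℝ) (t : ℝ) : ℝ × ℝ →L[ℝ] ℝ × ℝ :=
  (κ₀ t)⁻¹ • ((p t)⁻¹ • (inl ℝ ℝ ℝ ∘L snd ℝ ℝ ℝ) - κ₁ t • ContinuousLinearMap.id ℝ (ℝ × ℝ)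
    - q t • (inr ℝ ℝ ℝ ∘L fst ℝ ℝ ℝ))

noncomputable def selfAdjointForcing (κ₀ h : ℝ → ℝ) (t : ℝ) : ℝ × ℝ := (0, h t / κ₀ t)

@[simp]
lemma selfAdjointSystem_apply (t : ℝ) (u : ℝ × ℝ) :
    selfAdjointSystem κ₀ κ₁ p q t u =
      ((u.2 / p t - κ₁ t * u.1) / κ₀ t, (-(q t * u.1) - κ₁ t * u.2) / κ₀ t) := by
  ext <;> simp [selfAdjointSystem] <;> ring

@[simp]
lemma selfAdjointForcing_apply (t : ℝ) : selfAdjointForcing κ₀ h t = (0, h t / κ₀ t) := rfl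

lemma continuousOn_selfAdjointSystem (hκ₀c : ContinuousOn κ₀ I) (hκ₁c : ContinuousOn κ₁ I)
    (hpc : ContinuousOn p I) (hqc : ContinuousOn q I) (hκ₀ : ∀ t ∈ I, κ₀ t ≠ 0)
    (hp : ∀ t ∈ I, p t ≠ 0) : ContinuousOn (selfAdjointSystem κ₀ κ₁ p q) I :=
  (hκ₀c.inv₀ hκ₀).smul ((((hpc.inv₀ hp).smul continuousOn_const).sub
    (hκ₁c.smul continuousOn_const)).sub (hqc.smul continuousOn_const))

lemma continuousOn_selfAdjointForcing (hκ₀c : ContinuousOn κ₀ I) (hhc : ContinuousOn h I)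
    (hκ₀ : ∀ t ∈ I, κ₀ t ≠ 0) : ContinuousOn (selfAdjointForcing κ₀ h) I :=
  continuousOn_const.prodMk (hhc.div hκ₀c hκ₀)

lemma isSolutionSA_fst_of_hasDerivAt (hIopen : IsOpen I) (hpc : ContinuousOn p I)
    (hqc : ContinuousOn q I) (hhc : ContinuousOn h I) (hκ₀ : ∀ t ∈ I, κ₀ t ≠ 0)
    (hp : ∀ t ∈ I, p t ≠ 0) {u : ℝ → ℝ × ℝ}
    (hu : ∀ t ∈ I,
      HasDerivAt u (selfAdjointSystem κ₀ κ₁ p q t (u t) + selfAdjointForcing κ₀ h t) t) :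
    IsSolutionSA κ₀ κ₁ p q h I (fun t => (u t).1) ∧
      ∀ t ∈ I, Dconf κ₀ κ₁ (fun t => (u t).1) t = (u t).2 / p t := by
  set x := fun t => (u t).1
  set w := fun t => (u t).2
  have hx' t (ht : t ∈ I) : HasDerivAt x
      (selfAdjointSystem κ₀ κ₁ p q t (u t) + selfAdjointForcing κ₀ h t).1 t :=
    (hasFDerivAt_fst (𝕜 := ℝ) (p := u t)).comp_hasDerivAt t (hu t ht)
  have hw' t (ht : t ∈ I) : HasDerivAt w
      (selfAdjointSystem κ₀ κ₁ p q t (u t) + selfAdjointForcing κ₀ h t).2 t :=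
    (hasFDerivAt_snd (𝕜 := ℝ) (p := u t)).comp_hasDerivAt t (hu t ht)
  have hDx : ∀ t ∈ I, Dconf κ₀ κ₁ x t = w t / p t := fun t ht => by
    rw [(hx' t ht).dconf_eq]
    simp only [Prod.fst_add, selfAdjointSystem_apply, selfAdjointForcing_apply, add_zero]
    field_simp [hκ₀ t ht]
    ring
  have hpDx : ∀ t ∈ I, (fun s => p s * Dconf κ₀ κ₁ x s) =ᶠ[𝓝 t] w := fun t ht =>
    eventually_of_mem (hIopen.mem_nhds ht) fun s hs => by
      dsimp only
      rw [hDx s hs, mul_div_cancel₀ _ (hp s hs)]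
  have hDpDx : ∀ t ∈ I, Dconf κ₀ κ₁ (fun s => p s * Dconf κ₀ κ₁ x s) t = h t - q t * x t :=
    fun t ht => by
      rw [(hpDx t ht).dconf_eq, (hw' t ht).dconf_eq]
      simp only [Prod.snd_add, selfAdjointSystem_apply, selfAdjointForcing_apply]
      field_simp [hκ₀ t ht]
      ring
  have hxc : ContinuousOn x I := HasDerivAt.continuousOn hx'
  have hwc : ContinuousOn w I := HasDerivAt.continuousOn hw'
  refine ⟨⟨fun t ht => (hx' t ht).differentiableAt, (hwc.div hpc hp).congr hDx,
    fun t ht => (hw' t ht).differentiableAt.congr_of_eventuallyEq (hpDx t ht),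
    (hhc.sub (hqc.mul hxc)).congr hDpDx, fun t ht => by rw [hDpDx t ht]; ring⟩, hDx⟩

lemma IsSolutionSA.hasDerivAt (hκ₀ : ∀ t ∈ I, κ₀ t ≠ 0) (hp : ∀ t ∈ I, p t ≠ 0) {y : ℝ → ℝ}
    (hy : IsSolutionSA κ₀ κ₁ p q h I y) (t : ℝ) (ht : t ∈ I) :
    HasDerivAt (fun s => (y s, p s * Dconf κ₀ κ₁ y s))
      (selfAdjointSystem κ₀ κ₁ p q t (y t, p t * Dconf κ₀ κ₁ y t) + selfAdjointForcing κ₀ h t)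
      t := by
  obtain ⟨hyd, -, hpDyd, -, hyeq⟩ := hy
  convert (hyd t ht).hasDerivAt.prodMk (hpDyd t ht).hasDerivAt using 1
  have heq := hyeq t ht
  simp only [Dconf] at heq ⊢
  ext <;>
    simp only [Prod.fst_add, Prod.snd_add, selfAdjointSystem_apply, selfAdjointForcing_apply]
  · field_simp [hκ₀ t ht, hp t ht]
    ring
  · field_simp [hκ₀ t ht]
    linarith

end SelfAdjoint

theorem selfadjoint_ivp_existence_uniqueness_general
    (I : Set ℝ) (hIopen : IsOpen I) (hIconn : I.OrdConnected)
    (κ₀ κ₁ : ℝ → ℝ)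
    (hκ₀c : ContinuousOn κ₀ I) (hκ₁c : ContinuousOn κ₁ I)
    (hκ₀pos : ∀ t ∈ I, 0 < κ₀ t)
    (p q h : ℝ → ℝ)
    (hpc : ContinuousOn p I) (hqc : ContinuousOn q I) (hhc : ContinuousOn h I)
    (hp : ∀ t ∈ I, p t ≠ 0)
    (t₀ : ℝ) (ht₀ : t₀ ∈ I) (x₀ x₁ : ℝ) :
    ∃ x : ℝ → ℝ,
      (IsSolutionSA κ₀ κ₁ p q h I x ∧ x t₀ = x₀ ∧ Dconf κ₀ κ₁ x t₀ = x₁) ∧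
      ∀ y : ℝ → ℝ,
        (IsSolutionSA κ₀ κ₁ p q h I y ∧ y t₀ = x₀ ∧ Dconf κ₀ κ₁ y t₀ = x₁) →
        Set.EqOn y x I := by
  have hκ₀ t (ht : t ∈ I) : κ₀ t ≠ 0 := (hκ₀pos t ht).ne'
  obtain ⟨u, ⟨hu₀, hu⟩, hu_unique⟩ := exists_unique_hasDerivAt_clm_apply_add hIopen hIconn
    (continuousOn_selfAdjointSystem hκ₀c hκ₁c hpc hqc hκ₀ hp)
    (continuousOn_selfAdjointForcing hκ₀c hhc hκ₀) ht₀ (x₀, p t₀ * x₁)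
  obtain ⟨hx, hDx⟩ := isSolutionSA_fst_of_hasDerivAt hIopen hpc hqc hhc hκ₀ hp hu
  refine ⟨fun t => (u t).1, ⟨hx, by simp [hu₀], ?_⟩, ?_⟩
  · rw [hDx t₀ ht₀, hu₀]
    field_simp [hp t₀ ht₀]
  · rintro y ⟨hy, hy₀, hDy₀⟩ t ht
    exact congrArg Prod.fst <|
      hu_unique _ (by rw [hy₀, hDy₀]) (hy.hasDerivAt hκ₀ hp) ht

/-- Existence and uniqueness of solutions of the self-adjoint initial value
problem `D^α[p D^α x] = h`, `x(t₀) = x₀`, `D^α x(t₀) = x₁` on an open interval. -/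
theorem selfadjoint_ivp_existence_uniqueness
    (I : Set ℝ) (hIopen : IsOpen I) (hIconn : I.OrdConnected)
    (κ₀ κ₁ : ℝ → ℝ)
    (hκ₀c : ContinuousOn κ₀ I) (hκ₁c : ContinuousOn κ₁ I)
    (hκ₀pos : ∀ t ∈ I, 0 < κ₀ t) (hκ₁nn : ∀ t ∈ I, 0 ≤ κ₁ t)
    (p q h : ℝ → ℝ)
    (hpc : ContinuousOn p I) (hqc : ContinuousOn q I) (hhc : ContinuousOn h I)
    (hp : ∀ t ∈ I, p t ≠ 0)
    (t₀ : ℝ) (ht₀ : t₀ ∈ I) (x₀ x₁ : ℝ) :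
    ∃ x : ℝ → ℝ,
      (IsSolutionSA κ₀ κ₁ p q h I x ∧ x t₀ = x₀ ∧ Dconf κ₀ κ₁ x t₀ = x₁) ∧
      ∀ y : ℝ → ℝ,
        (IsSolutionSA κ₀ κ₁ p q h I y ∧ y t₀ = x₀ ∧ Dconf κ₀ κ₁ y t₀ = x₁) →
        Set.EqOn y x I :=
  selfadjoint_ivp_existence_uniqueness_general I hIopen hIconn κ₀ κ₁ hκ₀c hκ₁c hκ₀pos p q h hpc hqc
    hhc hp t₀ ht₀ x₀ x₁
end

section
/- (Conformable Lagrange identity) Let p, q : I → ℝ be continuous with p(t) > 0 for all t ∈ I, and let Lx(t) := D^α[p·D^α x](t) + q(t)·x(t). If x and y are functions on I such that D^α x, D^α y, D^α[p·D^α x], and D^α[p·D^α y] are continuous on I, then for all t ∈ I: x(t)·Ly(t) − y(t)·Lx(t) = D^α[p·W(x,y)](t) + κ₁(t)·p(t)·W(x,y)(t), where D^α[p·W(x,y)] is the conformable derivative of the function t ↦ p(t)·W(x,y)(t). -/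
open Set

/-- The self-adjoint operator `Lx = D^α[p D^α x] + q x`. -/
noncomputable def Lop (κ₀ κ₁ p q : ℝ → ℝ) (x : ℝ → ℝ) (t : ℝ) : ℝ :=
  Dconf κ₀ κ₁ (fun s => p s * Dconf κ₀ κ₁ x s) t + q t * x t

/-- The conformable Wronskian `W(x,y)(t) = x(t) D^α y(t) - y(t) D^α x(t)`. -/
noncomputable def Wr (κ₀ κ₁ : ℝ → ℝ) (x y : ℝ → ℝ) (t : ℝ) : ℝ :=
  x t * Dconf κ₀ κ₁ y t - y t * Dconf κ₀ κ₁ x t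

/-! The conformable derivative obeys the twisted Leibniz rule
`D(fg) = f·Dg + g·Df − κ₁ f g`. Since `p·W(x,y) = x·(p Dy) − y·(p Dx)`, applying it to both
products makes the cross terms `p Dx Dy` cancel, leaving
`D(pW) = x·D(p Dy) − y·D(p Dx) − κ₁ p W`; the potential terms `q x y` cancel in `x Ly − y Lx`. -/

section Leibniz

variable {κ₀ κ₁ f g : ℝ → ℝ} {t : ℝ}

theorem Dconf_sub (hf : DifferentiableAt ℝ f t) (hg : DifferentiableAt ℝ g t) :
    Dconf κ₀ κ₁ (fun s => f s - g s) t = Dconf κ₀ κ₁ f t - Dconf κ₀ κ₁ g t := by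
  simp only [Dconf, deriv_fun_sub hf hg]
  ring

theorem Dconf_mul (hf : DifferentiableAt ℝ f t) (hg : DifferentiableAt ℝ g t) :
    Dconf κ₀ κ₁ (fun s => f s * g s) t
      = f t * Dconf κ₀ κ₁ g t + g t * Dconf κ₀ κ₁ f t - κ₁ t * f t * g t := by
  simp only [Dconf, deriv_fun_mul hf hg]
  ring

end Leibniz

theorem mul_Wr_eq (κ₀ κ₁ p x y : ℝ → ℝ) :
    (fun s => p s * Wr κ₀ κ₁ x y s)
      = fun s => x s * (p s * Dconf κ₀ κ₁ y s) - y s * (p s * Dconf κ₀ κ₁ x s) := by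
  funext s
  simp only [Wr]
  ring

theorem Dconf_mul_Wr {κ₀ κ₁ p x y : ℝ → ℝ} {t : ℝ}
    (hx : DifferentiableAt ℝ x t) (hy : DifferentiableAt ℝ y t)
    (hpx : DifferentiableAt ℝ (fun s => p s * Dconf κ₀ κ₁ x s) t)
    (hpy : DifferentiableAt ℝ (fun s => p s * Dconf κ₀ κ₁ y s) t) :
    Dconf κ₀ κ₁ (fun s => p s * Wr κ₀ κ₁ x y s) t
      = x t * Dconf κ₀ κ₁ (fun s => p s * Dconf κ₀ κ₁ y s) t
        - y t * Dconf κ₀ κ₁ (fun s => p s * Dconf κ₀ κ₁ x s) t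
        - κ₁ t * p t * Wr κ₀ κ₁ x y t := by
  rw [mul_Wr_eq, Dconf_sub (hx.fun_mul hpy) (hy.fun_mul hpx), Dconf_mul hx hpy, Dconf_mul hy hpx]
  simp only [Wr]
  ring

theorem conformable_lagrange_identity_general
    (I : Set ℝ) (κ₀ κ₁ : ℝ → ℝ)
    (p q : ℝ → ℝ)
    (x y : ℝ → ℝ)
    (hxd : ∀ t ∈ I, DifferentiableAt ℝ x t)
    (hxd2 : ∀ t ∈ I, DifferentiableAt ℝ (fun s => p s * Dconf κ₀ κ₁ x s) t)
    (hyd : ∀ t ∈ I, DifferentiableAt ℝ y t)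
    (hyd2 : ∀ t ∈ I, DifferentiableAt ℝ (fun s => p s * Dconf κ₀ κ₁ y s) t) :
    ∀ t ∈ I,
      x t * Lop κ₀ κ₁ p q y t - y t * Lop κ₀ κ₁ p q x t
        = Dconf κ₀ κ₁ (fun s => p s * Wr κ₀ κ₁ x y s) t
          + κ₁ t * p t * Wr κ₀ κ₁ x y t := by
  intro t ht
  rw [Dconf_mul_Wr (hxd t ht) (hyd t ht) (hxd2 t ht) (hyd2 t ht)]
  simp only [Lop]
  ring

/-- Conformable Lagrange identity:
`x Ly - y Lx = D^α[p W(x,y)] + κ₁ p W(x,y)` on `I`. -/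
theorem conformable_lagrange_identity
    (I : Set ℝ) (κ₀ κ₁ : ℝ → ℝ)
    (hκ₀c : ContinuousOn κ₀ I) (hκ₁c : ContinuousOn κ₁ I)
    (hκ₀pos : ∀ t ∈ I, 0 < κ₀ t) (hκ₁nn : ∀ t ∈ I, 0 ≤ κ₁ t)
    (p q : ℝ → ℝ)
    (hpc : ContinuousOn p I) (hqc : ContinuousOn q I)
    (hp : ∀ t ∈ I, 0 < p t)
    (x y : ℝ → ℝ)
    (hxd : ∀ t ∈ I, DifferentiableAt ℝ x t)
    (hxDc : ContinuousOn (Dconf κ₀ κ₁ x) I)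
    (hxd2 : ∀ t ∈ I, DifferentiableAt ℝ (fun s => p s * Dconf κ₀ κ₁ x s) t)
    (hxDc2 : ContinuousOn (Dconf κ₀ κ₁ (fun s => p s * Dconf κ₀ κ₁ x s)) I)
    (hyd : ∀ t ∈ I, DifferentiableAt ℝ y t)
    (hyDc : ContinuousOn (Dconf κ₀ κ₁ y) I)
    (hyd2 : ∀ t ∈ I, DifferentiableAt ℝ (fun s => p s * Dconf κ₀ κ₁ y s) t)
    (hyDc2 : ContinuousOn (Dconf κ₀ κ₁ (fun s => p s * Dconf κ₀ κ₁ y s)) I) :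
    ∀ t ∈ I,
      x t * Lop κ₀ κ₁ p q y t - y t * Lop κ₀ κ₁ p q x t
        = Dconf κ₀ κ₁ (fun s => p s * Wr κ₀ κ₁ x y s) t
          + κ₁ t * p t * Wr κ₀ κ₁ x y t :=
  conformable_lagrange_identity_general I κ₀ κ₁ p q x y hxd hxd2 hyd hyd2
end

section
/- (Green's formula) Let a < b with [a,b] ⊆ I, let p, q : I → ℝ be continuous with p(t) > 0 for all t ∈ I, and let Lx(t) := D^α[p·D^α x](t) + q(t)·x(t). If x and y are functions such that D^α x, D^α y, D^α[p·D^α x], and D^α[p·D^α y] are continuous on [a,b], then ⟨x, Ly⟩ − ⟨Lx, y⟩ = e_0(b,b)²·p(b)·W(x,y)(b) − e_0(b,a)²·p(a)·W(x,y)(a), where ⟨f,g⟩ := ∫_a^b f(t)·g(t)·e_0(b,t)² d_α t. -/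
open Set

/-- The inner product `⟨f,g⟩ = ∫_a^b f(t) g(t) e₀(b,t)² d_α t`. -/
noncomputable def innerConf (κ₀ κ₁ : ℝ → ℝ) (a b : ℝ) (f g : ℝ → ℝ) : ℝ :=
  ∫ t in a..b, f t * g t * (e0 κ₀ κ₁ b t) ^ 2 / κ₀ t

/-! Writing `ε(t) = e₀(b,t) = exp (∫_b^t κ₁/κ₀)`, one has `ε' = (κ₁/κ₀) ε`, so
`(ε f)' = ε · D^α f / κ₀` for every differentiable `f`. Hence
`e₀(b,·)² p W(x,y) = (ε x)(ε p D^α y) - (ε y)(ε p D^α x)` has derivative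
`ε² (x D^α[p D^α y] - y D^α[p D^α x]) / κ₀ = ε² (x Ly - y Lx) / κ₀` (Lagrange's identity), and
Green's formula is the fundamental theorem of calculus applied to it. -/

section Conformable

variable {κ₀ κ₁ : ℝ → ℝ} {a b s t : ℝ}

theorem hasDerivAt_e0_right (hc : ContinuousOn (fun τ => κ₁ τ / κ₀ τ) (Icc a b))
    (hs : s ∈ Icc a b) (ht : t ∈ Ioo a b) :
    HasDerivAt (e0 κ₀ κ₁ s) (e0 κ₀ κ₁ s t * (κ₁ t / κ₀ t)) t := by
  have hnhds : Ioo a b ∈ nhds t := Ioo_mem_nhds ht.1 ht.2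
  have hc' : ContinuousOn (fun τ => κ₁ τ / κ₀ τ) (Ioo a b) := hc.mono Ioo_subset_Icc_self
  have hint : IntervalIntegrable (fun τ => κ₁ τ / κ₀ τ) MeasureTheory.volume t s :=
    (hc.mono (uIcc_subset_Icc (Ioo_subset_Icc_self ht) hs)).intervalIntegrable
  have hprim := intervalIntegral.integral_hasDerivAt_left hint
    (hc'.stronglyMeasurableAtFilter isOpen_Ioo t ht) (hc'.continuousAt hnhds)
  exact hprim.neg.exp.congr_deriv (by rw [neg_neg]; rfl)

theorem hasDerivAt_e0_mul {f : ℝ → ℝ} (hc : ContinuousOn (fun τ => κ₁ τ / κ₀ τ) (Icc a b))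
    (hs : s ∈ Icc a b) (ht : t ∈ Ioo a b) (hf : DifferentiableAt ℝ f t) (hκ₀ : κ₀ t ≠ 0) :
    HasDerivAt (fun r => e0 κ₀ κ₁ s r * f r) (e0 κ₀ κ₁ s t * Dconf κ₀ κ₁ f t / κ₀ t) t := by
  refine ((hasDerivAt_e0_right hc hs ht).mul hf.hasDerivAt).congr_deriv ?_
  unfold Dconf
  field_simp

theorem continuousOn_e0 (hc : ContinuousOn (fun τ => κ₁ τ / κ₀ τ) (Icc a b)) (hab : a ≤ b) :
    ContinuousOn (e0 κ₀ κ₁ b) (Icc a b) := by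
  have hprim := intervalIntegral.continuousOn_primitive_interval_left
    (μ := MeasureTheory.volume)
    (ContinuousOn.integrableOn_compact isCompact_uIcc (hc.mono (uIcc_of_le hab).subset))
  rw [uIcc_of_le hab] at hprim
  exact Real.continuous_exp.comp_continuousOn hprim.neg

theorem hasDerivAt_e0_sq_mul_Wr {p q x y : ℝ → ℝ}
    (hc : ContinuousOn (fun τ => κ₁ τ / κ₀ τ) (Icc a b)) (hs : s ∈ Icc a b) (ht : t ∈ Ioo a b)
    (hκ₀ : κ₀ t ≠ 0) (hx : DifferentiableAt ℝ x t) (hy : DifferentiableAt ℝ y t)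
    (hpx : DifferentiableAt ℝ (fun r => p r * Dconf κ₀ κ₁ x r) t)
    (hpy : DifferentiableAt ℝ (fun r => p r * Dconf κ₀ κ₁ y r) t) :
    HasDerivAt (fun r => e0 κ₀ κ₁ s r ^ 2 * p r * Wr κ₀ κ₁ x y r)
      (e0 κ₀ κ₁ s t ^ 2 * (x t * Lop κ₀ κ₁ p q y t - Lop κ₀ κ₁ p q x t * y t) / κ₀ t) t := by
  have hsplit : (fun r => e0 κ₀ κ₁ s r ^ 2 * p r * Wr κ₀ κ₁ x y r) =
      fun r => e0 κ₀ κ₁ s r * x r * (e0 κ₀ κ₁ s r * (p r * Dconf κ₀ κ₁ y r))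
        - e0 κ₀ κ₁ s r * y r * (e0 κ₀ κ₁ s r * (p r * Dconf κ₀ κ₁ x r)) := by
    funext r
    simp only [Wr]
    ring
  rw [hsplit]
  refine (((hasDerivAt_e0_mul hc hs ht hx hκ₀).mul (hasDerivAt_e0_mul hc hs ht hpy hκ₀)).sub
    ((hasDerivAt_e0_mul hc hs ht hy hκ₀).mul (hasDerivAt_e0_mul hc hs ht hpx hκ₀))).congr_deriv ?_
  simp only [Lop]
  ring

theorem innerConf_sub_innerConf {x y u v : ℝ → ℝ} (hab : a ≤ b)
    (hκ₀ : ContinuousOn κ₀ (Icc a b)) (hκ₀ne : ∀ t ∈ Icc a b, κ₀ t ≠ 0)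
    (he : ContinuousOn (e0 κ₀ κ₁ b) (Icc a b)) (hx : ContinuousOn x (Icc a b))
    (hy : ContinuousOn y (Icc a b)) (hu : ContinuousOn u (Icc a b))
    (hv : ContinuousOn v (Icc a b)) :
    innerConf κ₀ κ₁ a b x v - innerConf κ₀ κ₁ a b u y
      = ∫ t in a..b, e0 κ₀ κ₁ b t ^ 2 * (x t * v t - u t * y t) / κ₀ t := by
  have hint : ∀ {f g : ℝ → ℝ}, ContinuousOn f (Icc a b) → ContinuousOn g (Icc a b) →
      IntervalIntegrable (fun t => f t * g t * e0 κ₀ κ₁ b t ^ 2 / κ₀ t) MeasureTheory.volume a b :=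
    fun hf hg => ContinuousOn.intervalIntegrable <| by
      rw [uIcc_of_le hab]
      exact ((hf.mul hg).mul (he.pow 2)).div hκ₀ hκ₀ne
  rw [innerConf, innerConf, ← intervalIntegral.integral_sub (hint hx hv) (hint hu hy)]
  congr 1
  funext t
  ring

end Conformable

theorem conformable_greens_formula_general
    (I : Set ℝ) (κ₀ κ₁ : ℝ → ℝ)
    (hκ₀c : ContinuousOn κ₀ I) (hκ₁c : ContinuousOn κ₁ I)
    (hκ₀pos : ∀ t ∈ I, 0 < κ₀ t)
    (a b : ℝ) (hab : a < b) (hIab : Icc a b ⊆ I)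
    (p q : ℝ → ℝ)
    (hpc : ContinuousOn p I) (hqc : ContinuousOn q I)
    (x y : ℝ → ℝ)
    (hxd : ∀ t ∈ Icc a b, DifferentiableAt ℝ x t)
    (hxDc : ContinuousOn (Dconf κ₀ κ₁ x) (Icc a b))
    (hxd2 : ∀ t ∈ Icc a b, DifferentiableAt ℝ (fun s => p s * Dconf κ₀ κ₁ x s) t)
    (hxDc2 : ContinuousOn (Dconf κ₀ κ₁ (fun s => p s * Dconf κ₀ κ₁ x s)) (Icc a b))
    (hyd : ∀ t ∈ Icc a b, DifferentiableAt ℝ y t)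
    (hyDc : ContinuousOn (Dconf κ₀ κ₁ y) (Icc a b))
    (hyd2 : ∀ t ∈ Icc a b, DifferentiableAt ℝ (fun s => p s * Dconf κ₀ κ₁ y s) t)
    (hyDc2 : ContinuousOn (Dconf κ₀ κ₁ (fun s => p s * Dconf κ₀ κ₁ y s)) (Icc a b)) :
    innerConf κ₀ κ₁ a b x (Lop κ₀ κ₁ p q y)
      - innerConf κ₀ κ₁ a b (Lop κ₀ κ₁ p q x) y
      = (e0 κ₀ κ₁ b b) ^ 2 * p b * Wr κ₀ κ₁ x y b
        - (e0 κ₀ κ₁ b a) ^ 2 * p a * Wr κ₀ κ₁ x y a := by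
  have hκ₀ne : ∀ t ∈ Icc a b, κ₀ t ≠ 0 := fun t ht => (hκ₀pos t (hIab ht)).ne'
  have hκc : ContinuousOn (fun τ => κ₁ τ / κ₀ τ) (Icc a b) :=
    (hκ₁c.mono hIab).div (hκ₀c.mono hIab) hκ₀ne
  have he := continuousOn_e0 hκc hab.le
  have hxc : ContinuousOn x (Icc a b) := fun t ht => (hxd t ht).continuousAt.continuousWithinAt
  have hyc : ContinuousOn y (Icc a b) := fun t ht => (hyd t ht).continuousAt.continuousWithinAt
  have hLx : ContinuousOn (Lop κ₀ κ₁ p q x) (Icc a b) := hxDc2.add ((hqc.mono hIab).mul hxc)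
  have hLy : ContinuousOn (Lop κ₀ κ₁ p q y) (Icc a b) := hyDc2.add ((hqc.mono hIab).mul hyc)
  have hWc : ContinuousOn (fun r => e0 κ₀ κ₁ b r ^ 2 * p r * Wr κ₀ κ₁ x y r) (Icc a b) :=
    ((he.pow 2).mul (hpc.mono hIab)).mul ((hxc.mul hyDc).sub (hyc.mul hxDc))
  have hint : IntervalIntegrable
      (fun t => e0 κ₀ κ₁ b t ^ 2 * (x t * Lop κ₀ κ₁ p q y t - Lop κ₀ κ₁ p q x t * y t) / κ₀ t)
      MeasureTheory.volume a b := ContinuousOn.intervalIntegrable <| by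
    rw [uIcc_of_le hab.le]
    exact ((he.pow 2).mul ((hxc.mul hLy).sub (hLx.mul hyc))).div (hκ₀c.mono hIab) hκ₀ne
  rw [innerConf_sub_innerConf hab.le (hκ₀c.mono hIab) hκ₀ne he hxc hyc hLx hLy]
  refine intervalIntegral.integral_eq_sub_of_hasDerivAt_of_le hab.le hWc (fun t ht => ?_) hint
  have htI := Ioo_subset_Icc_self ht
  exact hasDerivAt_e0_sq_mul_Wr hκc (right_mem_Icc.2 hab.le) ht (hκ₀ne t htI) (hxd t htI)
    (hyd t htI) (hxd2 t htI) (hyd2 t htI)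

/-- Green's formula:
`⟨x, Ly⟩ - ⟨Lx, y⟩ = e₀(b,b)² p(b) W(x,y)(b) - e₀(b,a)² p(a) W(x,y)(a)`. -/
theorem conformable_greens_formula
    (I : Set ℝ) (κ₀ κ₁ : ℝ → ℝ)
    (hκ₀c : ContinuousOn κ₀ I) (hκ₁c : ContinuousOn κ₁ I)
    (hκ₀pos : ∀ t ∈ I, 0 < κ₀ t) (hκ₁nn : ∀ t ∈ I, 0 ≤ κ₁ t)
    (a b : ℝ) (hab : a < b) (hIab : Icc a b ⊆ I)
    (p q : ℝ → ℝ)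
    (hpc : ContinuousOn p I) (hqc : ContinuousOn q I)
    (hp : ∀ t ∈ I, 0 < p t)
    (x y : ℝ → ℝ)
    (hxd : ∀ t ∈ Icc a b, DifferentiableAt ℝ x t)
    (hxDc : ContinuousOn (Dconf κ₀ κ₁ x) (Icc a b))
    (hxd2 : ∀ t ∈ Icc a b, DifferentiableAt ℝ (fun s => p s * Dconf κ₀ κ₁ x s) t)
    (hxDc2 : ContinuousOn (Dconf κ₀ κ₁ (fun s => p s * Dconf κ₀ κ₁ x s)) (Icc a b))
    (hyd : ∀ t ∈ Icc a b, DifferentiableAt ℝ y t)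
    (hyDc : ContinuousOn (Dconf κ₀ κ₁ y) (Icc a b))
    (hyd2 : ∀ t ∈ Icc a b, DifferentiableAt ℝ (fun s => p s * Dconf κ₀ κ₁ y s) t)
    (hyDc2 : ContinuousOn (Dconf κ₀ κ₁ (fun s => p s * Dconf κ₀ κ₁ y s)) (Icc a b)) :
    innerConf κ₀ κ₁ a b x (Lop κ₀ κ₁ p q y)
      - innerConf κ₀ κ₁ a b (Lop κ₀ κ₁ p q x) y
      = (e0 κ₀ κ₁ b b) ^ 2 * p b * Wr κ₀ κ₁ x y b
        - (e0 κ₀ κ₁ b a) ^ 2 * p a * Wr κ₀ κ₁ x y a :=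
  conformable_greens_formula_general I κ₀ κ₁ hκ₀c hκ₁c hκ₀pos a b hab hIab p q hpc hqc x y hxd hxDc
    hxd2 hxDc2 hyd hyDc hyd2 hyDc2
end

section
/- (Liouville's Theorem) Let A, B, C : I → ℝ be continuous with A(t) ≠ 0 for all t ∈ I, and let t₀ ∈ I. If x and y are twice-differentiable solutions on I of A(t)·D^α[D^α x](t) + B(t)·D^α x(t) + C(t)·x(t) = 0, then their Wronskian satisfies W(x,y)(t) = W(x,y)(t₀)·exp(∫_{t₀}^t (−B(τ)/A(τ) − 2κ₁(τ))/κ₀(τ) dτ) for all t ∈ I. -/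
/-!
Since `κ₀ f' = D^α f - κ₁ f`, differentiating `W = x D^α y - y D^α x` gives
`κ₀ W' = x D^α D^α y - y D^α D^α x - 2 κ₁ W`, and substituting the equation for `x` and `y`
turns the first two terms into `-(B / A) W`. So `W` solves the scalar linear equation
`W' = p W` with `p = (-B/A - 2κ₁)/κ₀`, and `W · exp(-∫_{t₀}^t p)` has zero derivative
on `[[t₀, t]]`.
-/

open Set

open Real Topology MeasureTheory
open scoped Interval

theorem ContinuousOn.hasDerivWithinAt_integral_uIcc {p : ℝ → ℝ} {a b w : ℝ}
    (hp : ContinuousOn p [[a, b]]) (hw : w ∈ [[a, b]]) :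
    HasDerivWithinAt (fun u => ∫ τ in a..u, p τ) (p w) [[a, b]] w := by
  have : Fact (w ∈ [[a, b]]) := ⟨hw⟩
  have hint : IntervalIntegrable p volume a w :=
    (hp.mono (uIcc_subset_uIcc_left hw)).intervalIntegrable
  have hmeas : StronglyMeasurableAtFilter p (𝓝[[[a, b]]] w) volume :=
    ⟨[[a, b]], self_mem_nhdsWithin, hp.aestronglyMeasurable measurableSet_uIcc⟩
  exact intervalIntegral.integral_hasDerivWithinAt_right hint hmeas (hp w hw)

theorem Convex.eq_of_hasDerivWithinAt_zero {s : Set ℝ} {g : ℝ → ℝ} (hs : Convex ℝ s)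
    (hg : ∀ w ∈ s, HasDerivWithinAt g 0 s w) {a b : ℝ} (ha : a ∈ s) (hb : b ∈ s) :
    g a = g b := by
  have h := hs.norm_image_sub_le_of_norm_hasDerivWithin_le hg (C := 0) (by simp) hb ha
  rw [zero_mul, norm_le_zero_iff, sub_eq_zero] at h
  exact h

theorem eq_mul_exp_integral_of_hasDerivWithinAt {p f : ℝ → ℝ} {a b : ℝ}
    (hp : ContinuousOn p [[a, b]])
    (hf : ∀ s ∈ [[a, b]], HasDerivWithinAt f (p s * f s) [[a, b]] s) :
    f b = f a * exp (∫ τ in a..b, p τ) := by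
  set F : ℝ → ℝ := fun u => ∫ τ in a..u, p τ
  have hconst : ∀ w ∈ [[a, b]], HasDerivWithinAt (fun u => f u * exp (-F u)) 0 [[a, b]] w := by
    intro w hw
    refine ((hf w hw).mul (hp.hasDerivWithinAt_integral_uIcc hw).neg.exp).congr_deriv ?_
    ring
  have h := convex_uIcc a b |>.eq_of_hasDerivWithinAt_zero hconst left_mem_uIcc right_mem_uIcc
  simp only [F, intervalIntegral.integral_same, neg_zero, exp_zero, mul_one] at h
  rw [h, mul_assoc, ← exp_add, neg_add_cancel, exp_zero, mul_one]

section Conformable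

variable {κ₀ κ₁ x y : ℝ → ℝ} {t : ℝ}

theorem hasDerivAt_Wr (hκ₀ : κ₀ t ≠ 0) (hx : DifferentiableAt ℝ x t)
    (hDx : DifferentiableAt ℝ (Dconf κ₀ κ₁ x) t) (hy : DifferentiableAt ℝ y t)
    (hDy : DifferentiableAt ℝ (Dconf κ₀ κ₁ y) t) :
    HasDerivAt (Wr κ₀ κ₁ x y)
      ((x t * Dconf κ₀ κ₁ (Dconf κ₀ κ₁ y) t - y t * Dconf κ₀ κ₁ (Dconf κ₀ κ₁ x) t
        - 2 * κ₁ t * Wr κ₀ κ₁ x y t) / κ₀ t) t := by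
  refine ((hx.hasDerivAt.mul hDy.hasDerivAt).sub
    (hy.hasDerivAt.mul hDx.hasDerivAt)).congr_deriv ?_
  rw [eq_div_iff hκ₀]
  simp only [Wr, Dconf]
  ring

theorem mul_Dconf_Dconf_sub_eq_of_solutions {A B C : ℝ → ℝ} (hA : A t ≠ 0)
    (hxeq : A t * Dconf κ₀ κ₁ (Dconf κ₀ κ₁ x) t + B t * Dconf κ₀ κ₁ x t + C t * x t = 0)
    (hyeq : A t * Dconf κ₀ κ₁ (Dconf κ₀ κ₁ y) t + B t * Dconf κ₀ κ₁ y t + C t * y t = 0) :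
    x t * Dconf κ₀ κ₁ (Dconf κ₀ κ₁ y) t - y t * Dconf κ₀ κ₁ (Dconf κ₀ κ₁ x) t
      = -(B t) / A t * Wr κ₀ κ₁ x y t := by
  rw [div_mul_eq_mul_div, eq_div_iff hA, Wr]
  linear_combination x t * hyeq - y t * hxeq

theorem hasDerivAt_Wr_of_solutions {A B C : ℝ → ℝ} (hκ₀ : κ₀ t ≠ 0) (hA : A t ≠ 0)
    (hx : DifferentiableAt ℝ x t) (hDx : DifferentiableAt ℝ (Dconf κ₀ κ₁ x) t)
    (hy : DifferentiableAt ℝ y t) (hDy : DifferentiableAt ℝ (Dconf κ₀ κ₁ y) t)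
    (hxeq : A t * Dconf κ₀ κ₁ (Dconf κ₀ κ₁ x) t + B t * Dconf κ₀ κ₁ x t + C t * x t = 0)
    (hyeq : A t * Dconf κ₀ κ₁ (Dconf κ₀ κ₁ y) t + B t * Dconf κ₀ κ₁ y t + C t * y t = 0) :
    HasDerivAt (Wr κ₀ κ₁ x y) ((-(B t) / A t - 2 * κ₁ t) / κ₀ t * Wr κ₀ κ₁ x y t) t := by
  refine (hasDerivAt_Wr hκ₀ hx hDx hy hDy).congr_deriv ?_
  rw [mul_Dconf_Dconf_sub_eq_of_solutions hA hxeq hyeq]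
  ring

end Conformable

theorem liouville_formula_general
    (I : Set ℝ) (hIconn : I.OrdConnected)
    (κ₀ κ₁ : ℝ → ℝ)
    (hκ₀c : ContinuousOn κ₀ I) (hκ₁c : ContinuousOn κ₁ I)
    (hκ₀pos : ∀ t ∈ I, 0 < κ₀ t)
    (A B C : ℝ → ℝ)
    (hAc : ContinuousOn A I) (hBc : ContinuousOn B I)
    (hA : ∀ t ∈ I, A t ≠ 0)
    (t₀ : ℝ) (ht₀ : t₀ ∈ I)
    (x y : ℝ → ℝ)
    (hxd : ∀ t ∈ I, DifferentiableAt ℝ x t)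
    (hxd2 : ∀ t ∈ I, DifferentiableAt ℝ (Dconf κ₀ κ₁ x) t)
    (hxeq : ∀ t ∈ I,
      A t * Dconf κ₀ κ₁ (Dconf κ₀ κ₁ x) t + B t * Dconf κ₀ κ₁ x t + C t * x t = 0)
    (hyd : ∀ t ∈ I, DifferentiableAt ℝ y t)
    (hyd2 : ∀ t ∈ I, DifferentiableAt ℝ (Dconf κ₀ κ₁ y) t)
    (hyeq : ∀ t ∈ I,
      A t * Dconf κ₀ κ₁ (Dconf κ₀ κ₁ y) t + B t * Dconf κ₀ κ₁ y t + C t * y t = 0) :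
    ∀ t ∈ I,
      Wr κ₀ κ₁ x y t
        = Wr κ₀ κ₁ x y t₀
          * Real.exp (∫ τ in t₀..t, (-(B τ) / A τ - 2 * κ₁ τ) / κ₀ τ) := by
  intro t ht
  have hsub : [[t₀, t]] ⊆ I := hIconn.uIcc_subset ht₀ ht
  have hκ₀ : ∀ s ∈ I, κ₀ s ≠ 0 := fun s hs => (hκ₀pos s hs).ne'
  have hp : ContinuousOn (fun τ => (-(B τ) / A τ - 2 * κ₁ τ) / κ₀ τ) I :=
    ((hBc.neg.div hAc hA).sub (continuousOn_const.mul hκ₁c)).div hκ₀c hκ₀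
  refine eq_mul_exp_integral_of_hasDerivWithinAt (hp.mono hsub) fun s hs => ?_
  replace hs := hsub hs
  exact (hasDerivAt_Wr_of_solutions (hκ₀ s hs) (hA s hs) (hxd s hs) (hxd2 s hs) (hyd s hs)
    (hyd2 s hs) (hxeq s hs) (hyeq s hs)).hasDerivWithinAt

/-- Liouville's theorem: if `x, y` solve
`A D^α D^α x + B D^α x + C x = 0` on the interval `I`, then
`W(x,y)(t) = W(x,y)(t₀) · exp(∫_{t₀}^t (-B/A - 2κ₁)/κ₀)`
(i.e. `W(x,y)(t) = W(x,y)(t₀) e_{(-B/A-κ₁)}(t,t₀)`). -/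
theorem liouville_formula
    (I : Set ℝ) (hIconn : I.OrdConnected)
    (κ₀ κ₁ : ℝ → ℝ)
    (hκ₀c : ContinuousOn κ₀ I) (hκ₁c : ContinuousOn κ₁ I)
    (hκ₀pos : ∀ t ∈ I, 0 < κ₀ t) (hκ₁nn : ∀ t ∈ I, 0 ≤ κ₁ t)
    (A B C : ℝ → ℝ)
    (hAc : ContinuousOn A I) (hBc : ContinuousOn B I) (hCc : ContinuousOn C I)
    (hA : ∀ t ∈ I, A t ≠ 0)
    (t₀ : ℝ) (ht₀ : t₀ ∈ I)
    (x y : ℝ → ℝ)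
    (hxd : ∀ t ∈ I, DifferentiableAt ℝ x t)
    (hxd2 : ∀ t ∈ I, DifferentiableAt ℝ (Dconf κ₀ κ₁ x) t)
    (hxeq : ∀ t ∈ I,
      A t * Dconf κ₀ κ₁ (Dconf κ₀ κ₁ x) t + B t * Dconf κ₀ κ₁ x t + C t * x t = 0)
    (hyd : ∀ t ∈ I, DifferentiableAt ℝ y t)
    (hyd2 : ∀ t ∈ I, DifferentiableAt ℝ (Dconf κ₀ κ₁ y) t)
    (hyeq : ∀ t ∈ I,
      A t * Dconf κ₀ κ₁ (Dconf κ₀ κ₁ y) t + B t * Dconf κ₀ κ₁ y t + C t * y t = 0) :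
    ∀ t ∈ I,
      Wr κ₀ κ₁ x y t
        = Wr κ₀ κ₁ x y t₀
          * Real.exp (∫ τ in t₀..t, (-(B τ) / A τ - 2 * κ₁ τ) / κ₀ τ) :=
  liouville_formula_general I hIconn κ₀ κ₁ hκ₀c hκ₁c hκ₀pos A B C hAc hBc hA t₀ ht₀ x y hxd hxd2
    hxeq hyd hyd2 hyeq
end

section
/- (Riccati Factorization Theorem) Let p, q : I → ℝ be continuous with p(t) > 0 for all t ∈ I, let Lx(t) := D^α[p·D^α x](t) + q(t)·x(t), and let Rz(t) := D^α z(t) + q(t) + z(t)²/p(t) − κ₁(t)·z(t). If x is a function with D^α x and D^α[p·D^α x] continuous on I and x(t) ≠ 0 for all t ∈ I, and z is defined by z(t) := p(t)·D^α x(t)/x(t), then Lx(t) = x(t)·Rz(t) for all t ∈ I. -/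
/-! The `κ₀`-terms of `D^α f · g - f · D^α g` reproduce the classical quotient numerator, so `D^α`
obeys the quotient rule up to the proportional correction `κ₁ f / g`. Applied to
`z = (p D^α x) / x`, the terms `z D^α x` and `z² / p` produced by expanding `x · Rz` cancel, and
what remains is `Lx`. -/

open Set

theorem Dconf_div {κ₀ κ₁ f g : ℝ → ℝ} {t : ℝ} (hf : DifferentiableAt ℝ f t)
    (hg : DifferentiableAt ℝ g t) (hg0 : g t ≠ 0) :
    Dconf κ₀ κ₁ (fun s => f s / g s) t =
      (Dconf κ₀ κ₁ f t * g t - f t * Dconf κ₀ κ₁ g t) / g t ^ 2 + κ₁ t * (f t / g t) := by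
  rw [Dconf, deriv_fun_div hf hg hg0, Dconf, Dconf]
  field_simp
  ring

theorem riccati_factorization_general
    (I : Set ℝ) (κ₀ κ₁ : ℝ → ℝ)
    (p q : ℝ → ℝ)
    (hp : ∀ t ∈ I, 0 < p t)
    (x : ℝ → ℝ)
    (hxd : ∀ t ∈ I, DifferentiableAt ℝ x t)
    (hxd2 : ∀ t ∈ I, DifferentiableAt ℝ (fun s => p s * Dconf κ₀ κ₁ x s) t)
    (hxne : ∀ t ∈ I, x t ≠ 0)
    (z : ℝ → ℝ)
    (hz : ∀ t, z t = p t * Dconf κ₀ κ₁ x t / x t) :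
    ∀ t ∈ I,
      Dconf κ₀ κ₁ (fun s => p s * Dconf κ₀ κ₁ x s) t + q t * x t
        = x t * (Dconf κ₀ κ₁ z t + q t + (z t) ^ 2 / p t - κ₁ t * z t) := by
  intro t ht
  have hx0 := hxne t ht
  have hp0 := (hp t ht).ne'
  obtain rfl : z = fun s => p s * Dconf κ₀ κ₁ x s / x s := funext hz
  rw [Dconf_div (hxd2 t ht) (hxd t ht) hx0]
  field_simp
  ring

/-- Riccati Factorization Theorem: with `z = p D^α x / x`,
`Lx = x · Rz` on `I`, where `Lx = D^α[p D^α x] + q x` and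
`Rz = D^α z + q + z²/p - κ₁ z`. -/
theorem riccati_factorization
    (I : Set ℝ) (κ₀ κ₁ : ℝ → ℝ)
    (hκ₀c : ContinuousOn κ₀ I) (hκ₁c : ContinuousOn κ₁ I)
    (hκ₀pos : ∀ t ∈ I, 0 < κ₀ t) (hκ₁nn : ∀ t ∈ I, 0 ≤ κ₁ t)
    (p q : ℝ → ℝ)
    (hpc : ContinuousOn p I) (hqc : ContinuousOn q I)
    (hp : ∀ t ∈ I, 0 < p t)
    (x : ℝ → ℝ)
    (hxd : ∀ t ∈ I, DifferentiableAt ℝ x t)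
    (hxDc : ContinuousOn (Dconf κ₀ κ₁ x) I)
    (hxd2 : ∀ t ∈ I, DifferentiableAt ℝ (fun s => p s * Dconf κ₀ κ₁ x s) t)
    (hxDc2 : ContinuousOn (Dconf κ₀ κ₁ (fun s => p s * Dconf κ₀ κ₁ x s)) I)
    (hxne : ∀ t ∈ I, x t ≠ 0)
    (z : ℝ → ℝ)
    (hz : ∀ t, z t = p t * Dconf κ₀ κ₁ x t / x t) :
    ∀ t ∈ I,
      Dconf κ₀ κ₁ (fun s => p s * Dconf κ₀ κ₁ x s) t + q t * x t
        = x t * (Dconf κ₀ κ₁ z t + q t + (z t) ^ 2 / p t - κ₁ t * z t) :=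
  riccati_factorization_general I κ₀ κ₁ p q hp x hxd hxd2 hxne z hz
end
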